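/- Fix ε > 0 and an integer k ≥ 1. Suppose A = {x_1 ≤ x_2 ≤ … ≤ x_k} ⊂ ℝ attains the minimum of E_{x∼L_ε(0)}[ min_{a∈A′} |x − a| ] over all subsets A′ ⊆ ℝ of size at most k, and define y_i = (x_i + x_{i+1})/2 for i = 1, …, k−1, y_0 = −∞, y_k = +∞. Then: (1) for every i ∈ {1,…,k−1}, if y_i ≤ 0 then x_i = y_i − log(1 + 1/i)/ε; and (2) for every i ∈ {2,…,k}, if y_{i−1} ≥ 0 then x_i = y_{i−1} + log(1 + 1/(k−i+1))/ε. -/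

import Mathlib

open MeasureTheory Real Filter Set

noncomputable section

/-- The expected distance from a Laplace-distributed point of scale `1/ε` centered at
`0` to the nearest of the points `b_1,…,b_k`. -/
def expErr (ε : ℝ) {k : ℕ} (b : Fin k → ℝ) : ℝ :=
  ∫ y : ℝ, (⨅ i, |y - b i|) * ((ε / 2) * Real.exp (-(ε * |y|)))

namespace OptSpace
open Topology

def lap (ε : ℝ) (y : ℝ) : ℝ := ε / 2 * Real.exp (-(ε * |y|))

lemma lap_pos {ε : ℝ} (hε : 0 < ε) (y : ℝ) : 0 < lap ε y := by
  unfold lap; positivity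

lemma continuous_lap (ε : ℝ) : Continuous (lap ε) := by
  unfold lap
  exact continuous_const.mul (((continuous_const.mul continuous_abs).neg).rexp)

lemma integrable_exp_neg_abs {c : ℝ} (hc : 0 < c) :
    Integrable (fun y : ℝ => Real.exp (-(c * |y|))) := by
  have hIoi : IntegrableOn (fun y : ℝ => Real.exp (-(c * |y|))) (Ioi 0) := by
    refine (exp_neg_integrableOn_Ioi 0 hc).congr_fun (fun y hy => ?_) measurableSet_Ioi
    rw [abs_of_pos hy]; beta_reduce; rw [neg_mul]
  have hIic : IntegrableOn (fun y : ℝ => Real.exp (-(c * |y|))) (Iic 0) := by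
    rw [← Measure.map_neg_eq_self (volume : Measure ℝ)]
    have m : MeasurableEmbedding fun x : ℝ => -x := (Homeomorph.neg ℝ).measurableEmbedding
    rw [m.integrableOn_map_iff]
    simp_rw [Function.comp_def, abs_neg, neg_preimage, neg_Iic, neg_zero]
    exact Iff.mpr integrableOn_Ici_iff_integrableOn_Ioi hIoi
  have := hIic.union hIoi
  rwa [Iic_union_Ioi, integrableOn_univ] at this

lemma aux_abs_exp {c : ℝ} (hc : 0 < c) (y : ℝ) :
    |y| * Real.exp (-(c * |y|)) ≤ (2 / c) * Real.exp (-(c / 2 * |y|)) := by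
  have h1 : c / 2 * |y| * Real.exp (-(c / 2 * |y|)) ≤ 1 := by
    have h2 : c / 2 * |y| ≤ Real.exp (c / 2 * |y|) := (Real.add_one_le_exp _).trans' (by linarith)
    have h3 := Real.exp_pos (c / 2 * |y|)
    rw [Real.exp_neg]
    rw [mul_inv_le_iff₀ h3]
    linarith
  have h4 : Real.exp (-(c * |y|)) ≤ Real.exp (-(c / 2 * |y|)) * Real.exp (-(c / 2 * |y|)) := by
    rw [← Real.exp_add]
    apply Real.exp_le_exp.2; nlinarith [abs_nonneg y]
  calc |y| * Real.exp (-(c * |y|))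
      ≤ |y| * (Real.exp (-(c / 2 * |y|)) * Real.exp (-(c / 2 * |y|))) := by
        exact mul_le_mul_of_nonneg_left h4 (abs_nonneg y)
    _ = (2 / c) * (c / 2 * |y| * Real.exp (-(c / 2 * |y|))) * Real.exp (-(c / 2 * |y|)) := by
        field_simp
    _ ≤ (2 / c) * 1 * Real.exp (-(c / 2 * |y|)) := by
        have := Real.exp_pos (-(c / 2 * |y|))
        apply mul_le_mul_of_nonneg_right _ this.le
        exact mul_le_mul_of_nonneg_left h1 (by positivity)
    _ = (2 / c) * Real.exp (-(c / 2 * |y|)) := by ring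

/-- Anything measurable, dominated by `|y| + M`, times the Laplace density, is integrable. -/
lemma integrable_mul_lap {ε : ℝ} (hε : 0 < ε) {g : ℝ → ℝ} (hg : Measurable g) (M : ℝ)
    (hb : ∀ y, |g y| ≤ |y| + M) :
    Integrable (fun y => g y * lap ε y) := by
  have hint : Integrable (fun y : ℝ => (ε / 2) * ((2 / ε + |M|) * Real.exp (-(ε / 2 * |y|)))) :=
    ((integrable_exp_neg_abs (by positivity : (0:ℝ) < ε / 2)).const_mul _).const_mul _
  refine hint.mono' ?_ ?_
  · exact (hg.mul ((measurable_const.mul ((measurable_const.mul measurable_abs).neg.exp)))).aestronglyMeasurable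
  · refine Eventually.of_forall (fun y => ?_)
    have h0 : 0 < lap ε y := lap_pos hε y
    have h1 : |g y * lap ε y| ≤ (|y| + |M|) * lap ε y := by
      rw [abs_mul, abs_of_pos h0]
      apply mul_le_mul_of_nonneg_right _ h0.le
      exact (hb y).trans (by linarith [le_abs_self M])
    refine h1.trans ?_
    unfold lap
    have h2 := aux_abs_exp hε y
    have h3 : Real.exp (-(ε * |y|)) ≤ Real.exp (-(ε / 2 * |y|)) := by
      apply Real.exp_le_exp.2; nlinarith [abs_nonneg y]
    have h4 : (0:ℝ) < ε / 2 := by positivity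
    calc (|y| + |M|) * (ε / 2 * Real.exp (-(ε * |y|)))
        = (ε / 2) * (|y| * Real.exp (-(ε * |y|))) + (ε / 2) * (|M| * Real.exp (-(ε * |y|))) := by
          ring
      _ ≤ (ε / 2) * ((2 / ε) * Real.exp (-(ε / 2 * |y|))) + (ε / 2) * (|M| * Real.exp (-(ε / 2 * |y|))) := by
          gcongr
      _ = ε / 2 * ((2 / ε + |M|) * Real.exp (-(ε / 2 * |y|))) := by ring


variable {ε : ℝ} {k : ℕ}

lemma expErr_eq (b : Fin k → ℝ) : expErr ε b = ∫ y : ℝ, (⨅ i, |y - b i|) * lap ε y := rfl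

lemma bddBelow_absdist (b : Fin k → ℝ) (y : ℝ) :
    BddBelow (Set.range fun i => |y - b i|) := by
  refine ⟨0, ?_⟩; rintro _ ⟨i, rfl⟩; exact abs_nonneg _

lemma inf_absdist_nonneg [Nonempty (Fin k)] (b : Fin k → ℝ) (y : ℝ) :
    0 ≤ ⨅ i, |y - b i| :=
  le_ciInf fun i => abs_nonneg _

lemma measurable_inf_absdist (b : Fin k → ℝ) :
    Measurable fun y => ⨅ i, |y - b i| :=
  Measurable.iInf fun i => (measurable_id.sub_const (b i)).abs

lemma integrable_err (hε : 0 < ε) (hk : 0 < k) (b : Fin k → ℝ) :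
    Integrable (fun y => (⨅ i, |y - b i|) * lap ε y) := by
  haveI : Nonempty (Fin k) := ⟨⟨0, hk⟩⟩
  refine integrable_mul_lap hε (measurable_inf_absdist b) (|b (Classical.arbitrary _)|) fun y => ?_
  rw [abs_of_nonneg (inf_absdist_nonneg b y)]
  refine (ciInf_le (bddBelow_absdist b y) (Classical.arbitrary _)).trans ?_
  calc |y - b _| ≤ |y| + |b _| := abs_sub _ _
  _ ≤ _ := le_rfl

lemma integrable_absdist (hε : 0 < ε) (t : ℝ) :
    Integrable (fun y => |y - t| * lap ε y) := by
  refine integrable_mul_lap hε (measurable_id.sub_const t).abs |t| fun y => ?_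
  rw [abs_abs]; exact abs_sub _ _

/-- Key reduction: each point at the optimum minimizes the one-cell transport cost. -/
lemma key_min (hε : 0 < ε) (x : Fin k → ℝ) (hk : 0 < k) (j : Fin k)
    (hne : ∃ i : Fin k, i ≠ j)
    (hopt : ∀ b : Fin k → ℝ, expErr ε x ≤ expErr ε b)
    (S : Set ℝ) (hS : MeasurableSet S)
    (hin : ∀ y ∈ S, ∀ i, |y - x j| ≤ |y - x i|)
    (hout : ∀ y ∉ S, ∃ i, i ≠ j ∧ |y - x i| ≤ |y - x j|) (t : ℝ) :
    (∫ y in S, |y - x j| * lap ε y) ≤ ∫ y in S, |y - t| * lap ε y := by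
  haveI : Nonempty (Fin k) := ⟨j⟩
  haveI hne' : Nonempty {i : Fin k // i ≠ j} := ⟨⟨hne.choose, hne.choose_spec⟩⟩
  set c : ℝ → ℝ := fun y => ⨅ i : {i : Fin k // i ≠ j}, |y - x i.1| with hc
  have bddc : ∀ y : ℝ, BddBelow (Set.range fun i : {i : Fin k // i ≠ j} => |y - x i.1|) := by
    intro y; refine ⟨0, ?_⟩; rintro _ ⟨i, rfl⟩; exact abs_nonneg _
  have hcle : ∀ (y : ℝ) (i : Fin k), i ≠ j → c y ≤ |y - x i| := fun y i hi =>
    ciInf_le (bddc y) ⟨i, hi⟩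
  have hcge : ∀ (y m : ℝ), (∀ i : Fin k, i ≠ j → m ≤ |y - x i|) → m ≤ c y := fun y m h =>
    le_ciInf fun i => h i.1 i.2
  have hcnn : ∀ y, 0 ≤ c y := fun y => hcge y 0 fun i _ => abs_nonneg _
  have hcmeas : Measurable c := Measurable.iInf fun i => (measurable_id.sub_const (x i.1)).abs
  -- splitting of the infimum
  have inf_eq : ∀ (s y : ℝ),
      (⨅ i, |y - Function.update x j s i|) = min |y - s| (c y) := by
    intro s y
    apply le_antisymm
    · apply le_min
      · have h := ciInf_le (bddBelow_absdist (Function.update x j s) y) j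
        simpa [Function.update_self] using h
      · refine hcge y _ fun i hi => ?_
        have h := ciInf_le (bddBelow_absdist (Function.update x j s) y) i
        rwa [Function.update_of_ne hi] at h
    · refine le_ciInf fun i => ?_
      by_cases h : i = j
      · subst h; rw [Function.update_self]; exact min_le_left _ _
      · rw [Function.update_of_ne h]; exact (min_le_right _ _).trans (hcle y i h)
  -- integrabilities
  have Ic : Integrable (fun y => c y * lap ε y) := by
    refine integrable_mul_lap hε hcmeas |x hne'.some.1| fun y => ?_
    rw [abs_of_nonneg (hcnn y)]
    exact (hcle y _ hne'.some.2).trans ((abs_sub _ _).trans le_rfl)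
  have Ix : Integrable (fun y => (⨅ i, |y - x i|) * lap ε y) := integrable_err hε hk x
  have Ib : Integrable (fun y => min |y - t| (c y) * lap ε y) := by
    have := integrable_err hε hk (Function.update x j t)
    refine this.congr (Eventually.of_forall fun y => ?_)
    simp only [inf_eq t y]
  -- decompose expErr x
  have hxdec : expErr ε x = (∫ y in S, |y - x j| * lap ε y) + ∫ y in Sᶜ, c y * lap ε y := by
    have h1 : expErr ε x = ∫ y : ℝ, (⨅ i, |y - x i|) * lap ε y := expErr_eq x
    rw [h1, ← integral_add_compl hS Ix]
    congr 1
    · refine setIntegral_congr_fun hS fun y hy => ?_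
      have := inf_eq (x j) y
      rw [Function.update_eq_self] at this
      rw [this, min_eq_left]
      exact hcge y _ fun i _ => hin y hy i
    · refine setIntegral_congr_fun hS.compl fun y hy => ?_
      have := inf_eq (x j) y
      rw [Function.update_eq_self] at this
      rw [this, min_eq_right]
      obtain ⟨i, hi, hle⟩ := hout y hy
      exact (hcle y i hi).trans hle
  -- decompose and bound expErr (update x j t)
  have hbdec : expErr ε (Function.update x j t)
      ≤ (∫ y in S, |y - t| * lap ε y) + ∫ y in Sᶜ, c y * lap ε y := by
    have h1 : expErr ε (Function.update x j t)
        = ∫ y : ℝ, min |y - t| (c y) * lap ε y := by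
      rw [expErr_eq]; congr 1; funext y; rw [inf_eq t y]
    rw [h1, ← integral_add_compl hS Ib]
    apply add_le_add
    · refine setIntegral_mono_on Ib.integrableOn (integrable_absdist hε t).integrableOn hS
        fun y _ => ?_
      exact mul_le_mul_of_nonneg_right (min_le_left _ _) (lap_pos hε y).le
    · refine setIntegral_mono_on Ib.integrableOn Ic.integrableOn hS.compl fun y _ => ?_
      exact mul_le_mul_of_nonneg_right (min_le_right _ _) (lap_pos hε y).le
  have := (hxdec ▸ hopt (Function.update x j t)).trans hbdec
  linarith


lemma strictMono_of_opt (hε : 0 < ε) (hk : 0 < k) {x : Fin k → ℝ} (hmono : Monotone x)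
    (hopt : ∀ b : Fin k → ℝ, expErr ε x ≤ expErr ε b) : StrictMono x := by
  haveI : Nonempty (Fin k) := ⟨⟨0, hk⟩⟩
  refine hmono.strictMono_of_injective ?_
  intro i i' hii'
  by_contra hne
  set last : Fin k := ⟨k - 1, by omega⟩ with hlast
  have hle_last : ∀ m : Fin k, x m ≤ x last := fun m => hmono (by
    simp only [Fin.le_def, hlast]; omega)
  set T : ℝ := x last + 1 with hT
  set b : Fin k → ℝ := Function.update x i' T with hb
  have hpt : ∀ y, (⨅ m, |y - b m|) ≤ ⨅ m, |y - x m| := by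
    intro y
    refine le_ciInf fun m => ?_
    by_cases h : m = i'
    · have h2 : (⨅ m, |y - b m|) ≤ |y - b i| := ciInf_le (bddBelow_absdist b y) i
      rw [hb, Function.update_of_ne hne, hii'] at h2
      rw [h]; exact h2
    · have h2 : (⨅ m, |y - b m|) ≤ |y - b m| := ciInf_le (bddBelow_absdist b y) m
      rwa [hb, Function.update_of_ne h] at h2
  have Ix := integrable_err hε hk x
  have Ib := integrable_err hε hk b
  have hle : expErr ε b ≤ expErr ε x := by
    rw [expErr_eq, expErr_eq]
    refine integral_mono Ib Ix fun y => ?_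
    exact mul_le_mul_of_nonneg_right (hpt y) (lap_pos hε y).le
  have heq : expErr ε x = expErr ε b := le_antisymm (hopt b) hle
  have hzero : (∫ y : ℝ, ((⨅ m, |y - x m|) - ⨅ m, |y - b m|) * lap ε y) = 0 := by
    have : (fun y : ℝ => ((⨅ m, |y - x m|) - ⨅ m, |y - b m|) * lap ε y)
        = fun y => (⨅ m, |y - x m|) * lap ε y - (⨅ m, |y - b m|) * lap ε y := by
      funext y; ring
    rw [this, integral_sub Ix Ib, ← expErr_eq, ← expErr_eq, heq, sub_self]
  have Isub : Integrable (fun y : ℝ => ((⨅ m, |y - x m|) - ⨅ m, |y - b m|) * lap ε y) := by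
    refine (Ix.sub Ib).congr (Eventually.of_forall fun y => ?_)
    simp only [Pi.sub_apply]; ring
  have hae : (fun y : ℝ => ((⨅ m, |y - x m|) - ⨅ m, |y - b m|) * lap ε y) =ᵐ[volume] 0 := by
    refine (integral_eq_zero_iff_of_nonneg ?_ Isub).mp hzero
    refine fun y => mul_nonneg (by simp only [Pi.zero_apply]; linarith [hpt y]) (lap_pos hε y).le
  -- but on an interval near T the difference is positive
  have hsub : Ioo (T - 4⁻¹) (T + 4⁻¹) ⊆
      {y : ℝ | ¬ ((⨅ m, |y - x m|) - ⨅ m, |y - b m|) * lap ε y = 0} := by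
    intro y hy
    simp only [mem_setOf_eq]
    have h1 : (3:ℝ)/4 ≤ ⨅ m, |y - x m| := by
      refine le_ciInf fun m => ?_
      have hm := hle_last m
      have hy1 := hy.1
      have h3 : (3:ℝ)/4 ≤ y - x m := by
        simp only [hT] at hy1 ⊢; linarith
      exact h3.trans (le_abs_self _)
    have h2 : (⨅ m, |y - b m|) ≤ 4⁻¹ := by
      refine (ciInf_le (bddBelow_absdist b y) i').trans ?_
      rw [hb, Function.update_self]
      rw [abs_le]
      exact ⟨by linarith [hy.1], by linarith [hy.2]⟩
    have hpos : 0 < ((⨅ m, |y - x m|) - ⨅ m, |y - b m|) * lap ε y :=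
      mul_pos (by linarith) (lap_pos hε y)
    exact hpos.ne'
  have hnull := hae
  rw [Filter.EventuallyEq, ae_iff] at hnull
  have hmeasIoo : volume (Ioo (T - 4⁻¹) (T + 4⁻¹)) = 0 :=
    measure_mono_null hsub (by simpa using hnull)
  rw [Real.volume_Ioo] at hmeasIoo
  simp only [show T + 4⁻¹ - (T - 4⁻¹) = (1:ℝ)/2 by ring] at hmeasIoo
  norm_num at hmeasIoo


lemma integrable_lap (hε : 0 < ε) : Integrable (lap ε) := by
  have := integrable_mul_lap hε measurable_const (M := 1) (g := fun _ => (1:ℝ))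
    (fun y => by rw [abs_one]; linarith [abs_nonneg y])
  simpa using this

lemma integrable_id_lap (hε : 0 < ε) : Integrable (fun y => y * lap ε y) :=
  integrable_mul_lap hε measurable_id 0 (fun y => by simp)

lemma lap_eq_exp {y : ℝ} (hy : y ≤ 0) : lap ε y = ε / 2 * Real.exp (ε * y) := by
  unfold lap; rw [abs_of_nonpos hy, mul_neg, neg_neg]

lemma integral_lap_ab (hε : 0 < ε) {a b : ℝ} (hab : a ≤ b) (hb : b ≤ 0) :
    ∫ y in a..b, lap ε y = (Real.exp (ε * b) - Real.exp (ε * a)) / 2 := by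
  have hcong : ∫ y in a..b, lap ε y = ∫ y in a..b, ε / 2 * Real.exp (ε * y) := by
    apply intervalIntegral.integral_congr
    intro y hy
    rw [uIcc_of_le hab] at hy
    exact lap_eq_exp (hy.2.trans hb)
  rw [hcong]
  have hderiv : ∀ y ∈ uIcc a b, HasDerivAt (fun u => Real.exp (ε * u) / 2)
      (ε / 2 * Real.exp (ε * y)) y := by
    intro y _
    have h1 : HasDerivAt (fun u : ℝ => ε * u) ε y := by
      simpa using (hasDerivAt_id y).const_mul ε
    have := (h1.exp).div_const 2
    exact this.congr_deriv (by ring)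
  rw [intervalIntegral.integral_eq_sub_of_hasDerivAt hderiv
    (((continuous_const.mul ((continuous_const.mul continuous_id).rexp))).intervalIntegrable a b)]
  ring

lemma deriv_g (a b t0 : ℝ) :
    HasDerivAt (fun t => (t * (∫ y in a..t, lap ε y) - ∫ y in a..t, y * lap ε y)
      + ((∫ y in t..b, y * lap ε y) - t * ∫ y in t..b, lap ε y))
    ((∫ y in a..t0, lap ε y) - ∫ y in t0..b, lap ε y) t0 := by
  have hf : Continuous (lap ε) := continuous_lap ε
  have hyf : Continuous (fun y => y * lap ε y) := continuous_id.mul hf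
  have hA : HasDerivAt (fun t => ∫ y in a..t, lap ε y) (lap ε t0) t0 :=
    intervalIntegral.integral_hasDerivAt_right (hf.intervalIntegrable a t0)
      (hf.stronglyMeasurableAtFilter _ _) hf.continuousAt
  have hB : HasDerivAt (fun t => ∫ y in a..t, y * lap ε y) (t0 * lap ε t0) t0 :=
    intervalIntegral.integral_hasDerivAt_right (hyf.intervalIntegrable a t0)
      (hyf.stronglyMeasurableAtFilter _ _) hyf.continuousAt
  have hC : HasDerivAt (fun t => ∫ y in t..b, y * lap ε y) (-(t0 * lap ε t0)) t0 :=
    intervalIntegral.integral_hasDerivAt_left (hyf.intervalIntegrable t0 b)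
      (hyf.stronglyMeasurableAtFilter _ _) hyf.continuousAt
  have hD : HasDerivAt (fun t => ∫ y in t..b, lap ε y) (-lap ε t0) t0 :=
    intervalIntegral.integral_hasDerivAt_left (hf.intervalIntegrable t0 b)
      (hf.stronglyMeasurableAtFilter _ _) hf.continuousAt
  have h := (((hasDerivAt_id t0).mul hA).sub hB).add
    (hC.sub (((hasDerivAt_id t0).mul hD)))
  refine h.congr_deriv ?_
  simp only [id]
  ring

/-- `g` agrees with the cell transport cost on `Icc a b`. -/
lemma psi_eq_g (hε : 0 < ε) {a b : ℝ} (hab : a ≤ b) {t : ℝ} (ht : t ∈ Icc a b) :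
    (∫ y in Ioc a b, |y - t| * lap ε y)
      = (t * (∫ y in a..t, lap ε y) - ∫ y in a..t, y * lap ε y)
        + ((∫ y in t..b, y * lap ε y) - t * ∫ y in t..b, lap ε y) := by
  have hf : Continuous (lap ε) := continuous_lap ε
  have hyf : Continuous (fun y => y * lap ε y) := continuous_id.mul hf
  have hcont : Continuous fun y => |y - t| * lap ε y :=
    ((continuous_id.sub continuous_const).abs).mul hf
  have h1 : (∫ y in Ioc a b, |y - t| * lap ε y) = ∫ y in a..b, |y - t| * lap ε y :=
    (intervalIntegral.integral_of_le hab).symm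
  rw [h1, ← intervalIntegral.integral_add_adjacent_intervals
    (hcont.intervalIntegrable a t) (hcont.intervalIntegrable t b)]
  congr 1
  · have e1 : ∫ y in a..t, |y - t| * lap ε y = ∫ y in a..t, (t * lap ε y - y * lap ε y) := by
      apply intervalIntegral.integral_congr
      intro y hy
      rw [uIcc_of_le ht.1] at hy
      show |y - t| * lap ε y = t * lap ε y - y * lap ε y
      rw [abs_of_nonpos (by linarith [hy.2] : y - t ≤ 0)]
      ring
    rw [e1, intervalIntegral.integral_sub ((hf.intervalIntegrable a t).const_mul t)
      (hyf.intervalIntegrable a t), intervalIntegral.integral_const_mul]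
  · have e2 : ∫ y in t..b, |y - t| * lap ε y = ∫ y in t..b, (y * lap ε y - t * lap ε y) := by
      apply intervalIntegral.integral_congr
      intro y hy
      rw [uIcc_of_le ht.2] at hy
      show |y - t| * lap ε y = y * lap ε y - t * lap ε y
      rw [abs_of_nonneg (by linarith [hy.1] : 0 ≤ y - t)]
      ring
    rw [e2, intervalIntegral.integral_sub (hyf.intervalIntegrable t b)
      ((hf.intervalIntegrable t b).const_mul t), intervalIntegral.integral_const_mul]

lemma stationary_Ioc (hε : 0 < ε) {a b t0 : ℝ} (hat : a < t0) (htb : t0 < b) (hb : b ≤ 0)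
    (hmin : ∀ t, (∫ y in Ioc a b, |y - t0| * lap ε y) ≤ ∫ y in Ioc a b, |y - t| * lap ε y) :
    2 * Real.exp (ε * t0) = Real.exp (ε * a) + Real.exp (ε * b) := by
  have hab : a ≤ b := (hat.trans htb).le
  have hloc : IsLocalMin (fun t => (t * (∫ y in a..t, lap ε y) - ∫ y in a..t, y * lap ε y)
      + ((∫ y in t..b, y * lap ε y) - t * ∫ y in t..b, lap ε y)) t0 := by
    refine Filter.eventually_of_mem (Ioo_mem_nhds hat htb) fun t ht => ?_
    beta_reduce
    rw [← psi_eq_g hε hab ⟨ht.1.le, ht.2.le⟩, ← psi_eq_g hε hab ⟨hat.le, htb.le⟩]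
    exact hmin t
  have h0 := hloc.hasDerivAt_eq_zero (deriv_g a b t0)
  rw [intervalIntegral.integral_of_le hat.le, intervalIntegral.integral_of_le htb.le] at h0
  rw [← intervalIntegral.integral_of_le hat.le, ← intervalIntegral.integral_of_le htb.le] at h0
  rw [integral_lap_ab hε hat.le (htb.le.trans hb), integral_lap_ab hε htb.le hb] at h0
  linarith

lemma integral_lap_Iic (hε : 0 < ε) {c : ℝ} (hc : c ≤ 0) :
    ∫ y in Iic c, lap ε y = Real.exp (ε * c) / 2 := by
  have hint : IntegrableOn (lap ε) (Iic c) := (integrable_lap hε).integrableOn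
  have h1 := intervalIntegral_tendsto_integral_Iic c hint tendsto_id
  have h2 : Tendsto (fun a : ℝ => ∫ y in a..c, lap ε y) atBot (𝓝 (Real.exp (ε * c) / 2)) := by
    have heq : (fun a : ℝ => ∫ y in a..c, lap ε y)
        =ᶠ[atBot] fun a => (Real.exp (ε * c) - Real.exp (ε * a)) / 2 := by
      filter_upwards [eventually_le_atBot c] with a ha
      exact integral_lap_ab hε ha hc
    rw [tendsto_congr' heq]
    have h3 : Tendsto (fun a : ℝ => ε * a) atBot atBot := by
      exact Tendsto.const_mul_atBot hε tendsto_id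
    have h4 : Tendsto (fun a : ℝ => Real.exp (ε * a)) atBot (𝓝 0) :=
      Real.tendsto_exp_atBot.comp h3
    have h5 := (h4.const_sub (Real.exp (ε * c))).div_const 2
    simpa using h5
  exact tendsto_nhds_unique h1 h2

lemma stationary_Iic (hε : 0 < ε) {b t0 : ℝ} (htb : t0 < b) (hb : b ≤ 0)
    (hmin : ∀ t, (∫ y in Iic b, |y - t0| * lap ε y) ≤ ∫ y in Iic b, |y - t| * lap ε y) :
    2 * Real.exp (ε * t0) = Real.exp (ε * b) := by
  set a : ℝ := t0 - 1 with ha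
  have hab : a ≤ b := by linarith
  have hsplit : ∀ t ∈ Icc a b, (∫ y in Iic b, |y - t| * lap ε y)
      = (t * (∫ y in Iic a, lap ε y) - ∫ y in Iic a, y * lap ε y)
        + ((t * (∫ y in a..t, lap ε y) - ∫ y in a..t, y * lap ε y)
          + ((∫ y in t..b, y * lap ε y) - t * ∫ y in t..b, lap ε y)) := by
    intro t ht
    have hIic : Iic b = Iic a ∪ Ioc a b := (Iic_union_Ioc_eq_Iic hab).symm
    rw [hIic, setIntegral_union (Iic_disjoint_Ioc le_rfl) measurableSet_Ioc
      (integrable_absdist hε t).integrableOn (integrable_absdist hε t).integrableOn]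
    congr 1
    · have e1 : ∀ y ∈ Iic a, |y - t| * lap ε y = t * lap ε y - y * lap ε y := by
        intro y hy
        simp only [mem_Iic] at hy
        rw [abs_of_nonpos (by linarith [ht.1] : y - t ≤ 0)]
        ring
      rw [setIntegral_congr_fun measurableSet_Iic e1,
        integral_sub ((integrable_lap hε).integrableOn.const_mul t)
          (integrable_id_lap hε).integrableOn, MeasureTheory.integral_const_mul]
    · exact psi_eq_g hε hab ht
  have ht0 : t0 ∈ Icc a b := ⟨by linarith, htb.le⟩
  have hloc : IsLocalMin (fun t => (t * (∫ y in Iic a, lap ε y) - ∫ y in Iic a, y * lap ε y)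
      + ((t * (∫ y in a..t, lap ε y) - ∫ y in a..t, y * lap ε y)
        + ((∫ y in t..b, y * lap ε y) - t * ∫ y in t..b, lap ε y))) t0 := by
    refine Filter.eventually_of_mem (Ioo_mem_nhds (show a < t0 by linarith) htb) fun t ht => ?_
    beta_reduce
    rw [← hsplit t ⟨ht.1.le, ht.2.le⟩, ← hsplit t0 ht0]
    exact hmin t
  have hd : HasDerivAt (fun t => (t * (∫ y in Iic a, lap ε y) - ∫ y in Iic a, y * lap ε y)
      + ((t * (∫ y in a..t, lap ε y) - ∫ y in a..t, y * lap ε y)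
        + ((∫ y in t..b, y * lap ε y) - t * ∫ y in t..b, lap ε y)))
      ((∫ y in Iic a, lap ε y) + ((∫ y in a..t0, lap ε y) - ∫ y in t0..b, lap ε y)) t0 :=
    ((hasDerivAt_mul_const _).sub_const _).add (deriv_g a b t0)
  have h0 := hloc.hasDerivAt_eq_zero hd
  rw [integral_lap_Iic hε (by linarith : a ≤ (0:ℝ)),
    integral_lap_ab hε (by linarith : a ≤ t0) (htb.le.trans hb),
    integral_lap_ab hε htb.le hb] at h0
  linarith


lemma abs_le_left {a b y : ℝ} (hab : a ≤ b) (h : y ≤ (a + b) / 2) : |y - a| ≤ |y - b| := by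
  have h1 : |y - b| = b - y := by rw [abs_sub_comm, abs_of_nonneg (by linarith)]
  rw [h1, abs_le]
  constructor <;> linarith

lemma abs_le_right {a b y : ℝ} (hab : a ≤ b) (h : (a + b) / 2 ≤ y) : |y - b| ≤ |y - a| := by
  have h1 : |y - a| = y - a := abs_of_nonneg (by linarith)
  rw [h1, abs_le]
  constructor <;> linarith

lemma part1 (ε : ℝ) (hε : 0 < ε) (k : ℕ) (hk : 1 ≤ k)
    (x : Fin k → ℝ) (hmono : Monotone x)
    (hopt : ∀ b : Fin k → ℝ, expErr ε x ≤ expErr ε b) :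
    ∀ i : ℕ, ∀ _ : 1 ≤ i, ∀ hik : i < k,
      (x ⟨i - 1, lt_of_le_of_lt (Nat.sub_le i 1) hik⟩ + x ⟨i, hik⟩) / 2 ≤ 0 →
      x ⟨i - 1, lt_of_le_of_lt (Nat.sub_le i 1) hik⟩ =
        (x ⟨i - 1, lt_of_le_of_lt (Nat.sub_le i 1) hik⟩ + x ⟨i, hik⟩) / 2 - Real.log (1 + 1 / (i : ℝ)) / ε := by
  have hx : StrictMono x := strictMono_of_opt hε (by omega) hmono hopt
  have xcongr : ∀ {a b : ℕ} (ha : a < k) (hb : b < k), a = b → x ⟨a, ha⟩ = x ⟨b, hb⟩ := by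
    intro a b ha hb h; subst h; rfl
  -- clamped midpoint function
  set mid : ℕ → ℝ := fun j =>
    (x ⟨min j (k - 1), by omega⟩ + x ⟨min (j + 1) (k - 1), by omega⟩) / 2 with hmiddef
  have hmid : ∀ j (hj : j + 1 < k), mid j = (x ⟨j, by omega⟩ + x ⟨j + 1, hj⟩) / 2 := by
    intro j hj
    rw [hmiddef]
    simp only []
    rw [xcongr (by omega) (by omega) (by omega : min j (k - 1) = j),
      xcongr (by omega) (by omega) (by omega : min (j + 1) (k - 1) = j + 1)]
  have hmid_mono : ∀ j j' : ℕ, j ≤ j' → mid j ≤ mid j' := by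
    intro j j' h
    rw [hmiddef]
    simp only []
    have h1 : x ⟨min j (k-1), by omega⟩ ≤ x ⟨min j' (k-1), by omega⟩ :=
      hmono (by simp only [Fin.mk_le_mk]; omega)
    have h2 : x ⟨min (j+1) (k-1), by omega⟩ ≤ x ⟨min (j'+1) (k-1), by omega⟩ :=
      hmono (by simp only [Fin.mk_le_mk]; omega)
    linarith
  -- the stationarity equations
  have hEq0 : ∀ (h1k : 1 < k), mid 0 ≤ 0 →
      2 * Real.exp (ε * x ⟨0, by omega⟩) = Real.exp (ε * mid 0) := by
    intro h1k hle
    have hm := hmid 0 h1k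
    have hx01 : x ⟨0, by omega⟩ < x ⟨1, h1k⟩ := hx (by simp [Fin.mk_lt_mk])
    have hkey := key_min hε x (by omega) ⟨0, by omega⟩
      ⟨⟨1, h1k⟩, by simp [Fin.ext_iff]⟩ hopt (Iic (mid 0)) measurableSet_Iic
      (fun y hy i => ?_) (fun y hy => ?_)
    · refine stationary_Iic hε ?_ hle hkey
      rw [hm]; linarith
    · -- hin
      rcases Nat.eq_zero_or_pos i.val with h0 | hpos
      · have : i = ⟨0, by omega⟩ := Fin.ext h0
        rw [this]
      · have hxi : x ⟨1, h1k⟩ ≤ x i := hmono (by simp only [Fin.mk_le_mk, Fin.le_def]; omega)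
        refine abs_le_left (hx.monotone (by simp only [Fin.mk_le_mk, Fin.le_def]; omega)) ?_
        simp only [mem_Iic] at hy
        rw [hm] at hy
        linarith
    · -- hout
      simp only [mem_Iic, not_le] at hy
      refine ⟨⟨1, h1k⟩, by simp [Fin.ext_iff], ?_⟩
      refine abs_le_right (hx01.le) ?_
      rw [hm] at hy
      linarith
  have hEqS : ∀ j : ℕ, 1 ≤ j → ∀ (hj : j + 1 < k), mid j ≤ 0 →
      2 * Real.exp (ε * x ⟨j, by omega⟩)
        = Real.exp (ε * mid (j - 1)) + Real.exp (ε * mid j) := by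
    intro j hj1 hj hle
    have hmj := hmid j hj
    have hmj1 := hmid (j - 1) (by omega)
    have e1 : x ⟨j - 1 + 1, by omega⟩ = x ⟨j, by omega⟩ := xcongr _ _ (by omega)
    have hxlt : x ⟨j - 1, by omega⟩ < x ⟨j, by omega⟩ := hx (by simp [Fin.mk_lt_mk]; omega)
    have hxlt2 : x ⟨j, by omega⟩ < x ⟨j + 1, by omega⟩ := hx (by simp [Fin.mk_lt_mk])
    have ha : mid (j - 1) < x ⟨j, by omega⟩ := by rw [hmj1, e1]; linarith
    have hbgt : x ⟨j, by omega⟩ < mid j := by rw [hmj]; linarith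
    have hkey := key_min hε x (by omega) ⟨j, by omega⟩
      ⟨⟨j + 1, hj⟩, by simp [Fin.ext_iff]⟩ hopt (Ioc (mid (j - 1)) (mid j)) measurableSet_Ioc
      (fun y hy i => ?_) (fun y hy => ?_)
    · exact stationary_Ioc hε ha hbgt hle hkey
    · -- hin
      simp only [mem_Ioc] at hy
      rcases lt_trichotomy i.val j with hlt | heq | hgt
      · have hxi : x i ≤ x ⟨j - 1, by omega⟩ := hmono (by simp only [Fin.le_def]; omega)
        refine abs_le_right (le_of_lt (lt_of_le_of_lt hxi hxlt)) ?_
        rw [hmj1, e1] at hy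
        have : (x i + x ⟨j, by omega⟩) / 2 ≤ (x ⟨j - 1, by omega⟩ + x ⟨j, by omega⟩) / 2 := by
          linarith
        linarith [hy.1]
      · have : i = ⟨j, by omega⟩ := Fin.ext heq
        rw [this]
      · have hxi : x ⟨j + 1, hj⟩ ≤ x i := hmono (by simp only [Fin.le_def]; omega)
        refine abs_le_left (le_of_lt (lt_of_lt_of_le hxlt2 hxi)) ?_
        rw [hmj] at hy
        linarith [hy.2]
    · -- hout
      simp only [mem_Ioc, not_and_or, not_lt, not_le] at hy
      rcases hy with hy | hy
      · refine ⟨⟨j - 1, by omega⟩, by simp [Fin.ext_iff]; omega, ?_⟩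
        refine abs_le_left hxlt.le ?_
        rw [hmj1, e1] at hy
        linarith
      · refine ⟨⟨j + 1, hj⟩, by simp [Fin.ext_iff], ?_⟩
        refine abs_le_right hxlt2.le ?_
        rw [hmj] at hy
        linarith
  -- the induction giving the closed form
  have hInd : ∀ j : ℕ, ∀ (hj : j + 1 < k), mid j ≤ 0 →
      Real.exp (ε * x ⟨j, by omega⟩) * ((j : ℝ) + 2)
        = Real.exp (ε * mid j) * ((j : ℝ) + 1) := by
    intro j
    induction j with
    | zero =>
      intro hj h0
      have := hEq0 (by omega) h0
      push_cast
      linarith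
    | succ n ih =>
      intro hj hle
      have hmle : mid n ≤ 0 := (hmid_mono n (n + 1) (by omega)).trans hle
      have hprev := ih (by omega) hmle
      have heq := hEqS (n + 1) (by omega) hj hle
      have hsimp : n + 1 - 1 = n := by omega
      rw [hsimp] at heq
      set A := Real.exp (ε * x ⟨n, by omega⟩) with hA
      set B := Real.exp (ε * mid n) with hB
      set C := Real.exp (ε * x ⟨n + 1, by omega⟩) with hC
      set D := Real.exp (ε * mid (n + 1)) with hD
      have hv2 : B * B = A * C := by
        rw [hA, hB, hC, ← Real.exp_add, ← Real.exp_add]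
        congr 1
        rw [hmid n (by omega)]
        ring
      have hBpos : 0 < B := Real.exp_pos _
      have hB2 : B * ((n : ℝ) + 2) = ((n : ℝ) + 1) * C := by
        have hchain : B * (B * ((n : ℝ) + 2)) = B * (((n : ℝ) + 1) * C) := by
          calc B * (B * ((n : ℝ) + 2)) = (B * B) * ((n : ℝ) + 2) := by ring
          _ = (A * C) * ((n : ℝ) + 2) := by rw [hv2]
          _ = (A * ((n : ℝ) + 2)) * C := by ring
          _ = (B * ((n : ℝ) + 1)) * C := by rw [hprev]
          _ = B * (((n : ℝ) + 1) * C) := by ring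
        exact mul_left_cancel₀ hBpos.ne' hchain
      have h2 : 2 * C * ((n : ℝ) + 2) = (B + D) * ((n : ℝ) + 2) := by rw [heq]
      push_cast
      nlinarith [h2, hB2]
  -- conclude
  intro i h1i hik hle
  have hj : (i - 1) + 1 < k := by omega
  have e1 : x ⟨i - 1 + 1, hj⟩ = x ⟨i, hik⟩ := xcongr _ _ (by omega)
  have hmle : mid (i - 1) ≤ 0 := by
    rw [hmid (i - 1) hj, e1]; exact hle
  have hfin := hInd (i - 1) hj hmle
  have hcast : ((i - 1 : ℕ) : ℝ) = (i : ℝ) - 1 := by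
    push_cast [Nat.cast_sub h1i]; ring
  rw [hcast] at hfin
  have hipos : (0 : ℝ) < (i : ℝ) := by exact_mod_cast h1i
  have hlog : Real.log (1 + 1 / (i : ℝ)) = Real.log ((i : ℝ) + 1) - Real.log (i : ℝ) := by
    rw [show (1 : ℝ) + 1 / (i : ℝ) = ((i : ℝ) + 1) / (i : ℝ) by field_simp]
    rw [Real.log_div (by positivity) (by positivity)]
  have hmeq : mid (i - 1) = (x ⟨i - 1, by omega⟩ + x ⟨i, hik⟩) / 2 := by
    rw [hmid (i - 1) hj, e1]
  rw [← hmeq, hlog]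
  -- from hfin : exp(ε x_{i-1}) * (i+1) = exp(ε mid) * i
  have hfin2 : Real.exp (ε * x ⟨i - 1, by omega⟩) * ((i : ℝ) + 1)
      = Real.exp (ε * mid (i - 1)) * (i : ℝ) := by
    convert hfin using 2 <;> ring
  have hlogeq := congrArg Real.log hfin2
  rw [Real.log_mul (Real.exp_ne_zero _) (by positivity),
    Real.log_mul (Real.exp_ne_zero _) (by positivity),
    Real.log_exp, Real.log_exp] at hlogeq
  have hεne : ε ≠ 0 := hε.ne'
  field_simp
  linarith [hlogeq]


lemma expErr_reflect (ε : ℝ) {k : ℕ} (c : Fin k → ℝ) :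
    expErr ε (fun i => -(c (Fin.rev i))) = expErr ε c := by
  have h1 : ∀ y : ℝ, (⨅ i, |y - -(c (Fin.rev i))|) = ⨅ i, |(-y) - c i| := by
    intro y
    have h2 : (fun i : Fin k => |y - -(c (Fin.rev i))|)
        = (fun i : Fin k => |(-y) - c i|) ∘ Fin.rev := by
      funext i
      simp only [Function.comp_apply]
      rw [sub_neg_eq_add, ← abs_neg]
      congr 1
      ring
    rw [iInf, iInf, h2, Fin.rev_surjective.range_comp]
  calc expErr ε (fun i => -(c (Fin.rev i)))
      = ∫ y : ℝ, (⨅ i, |(-y) - c i|) * ((ε / 2) * Real.exp (-(ε * |(-y)|))) := by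
        unfold expErr
        congr 1
        funext y
        rw [h1 y, abs_neg]
    _ = ∫ y : ℝ, (⨅ i, |y - c i|) * ((ε / 2) * Real.exp (-(ε * |y|))) :=
        integral_neg_eq_self (fun y : ℝ => (⨅ i, |y - c i|) * ((ε / 2) * Real.exp (-(ε * |y|)))) volume
    _ = expErr ε c := rfl

lemma part2 (ε : ℝ) (hε : 0 < ε) (k : ℕ) (hk : 1 ≤ k)
    (x : Fin k → ℝ) (hmono : Monotone x)
    (hopt : ∀ b : Fin k → ℝ, expErr ε x ≤ expErr ε b) :
    ∀ i : ℕ, ∀ _ : 2 ≤ i, ∀ _ : i ≤ k,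
      0 ≤ (x ⟨i - 2, Nat.lt_of_lt_of_le (Nat.sub_lt_self two_pos ‹2 ≤ i›) ‹i ≤ k›⟩ + x ⟨i - 1, Nat.lt_of_lt_of_le (Nat.sub_lt_self one_pos (le_trans one_le_two ‹2 ≤ i›)) ‹i ≤ k›⟩) / 2 →
      x ⟨i - 1, Nat.lt_of_lt_of_le (Nat.sub_lt_self one_pos (le_trans one_le_two ‹2 ≤ i›)) ‹i ≤ k›⟩ =
        (x ⟨i - 2, Nat.lt_of_lt_of_le (Nat.sub_lt_self two_pos ‹2 ≤ i›) ‹i ≤ k›⟩ + x ⟨i - 1, Nat.lt_of_lt_of_le (Nat.sub_lt_self one_pos (le_trans one_le_two ‹2 ≤ i›)) ‹i ≤ k›⟩) / 2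
          + Real.log (1 + 1 / ((k : ℝ) - (i : ℝ) + 1)) / ε := by
  intro i h2i hik hpos
  set x' : Fin k → ℝ := fun j => -(x (Fin.rev j)) with hx'
  have hmono' : Monotone x' := by
    intro a b hab
    rw [hx']
    simp only []
    exact neg_le_neg (hmono (Fin.rev_le_rev.mpr hab))
  have hopt' : ∀ b : Fin k → ℝ, expErr ε x' ≤ expErr ε b := by
    intro b
    calc expErr ε x' = expErr ε x := expErr_reflect ε x
      _ ≤ expErr ε (fun j => -(b (Fin.rev j))) := hopt _
      _ = expErr ε b := expErr_reflect ε b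
  set m : ℕ := k - i + 1 with hm
  have hm1 : 1 ≤ m := by omega
  have hmk : m < k := by omega
  have hres := part1 ε hε k hk x' hmono' hopt' m hm1 hmk
  have hrev1 : x' ⟨m - 1, by omega⟩ = -(x ⟨i - 1, by omega⟩) := by
    rw [hx']
    simp only []
    congr 1
    apply congrArg
    apply Fin.ext
    simp [Fin.val_rev]
    omega
  have hrev2 : x' ⟨m, hmk⟩ = -(x ⟨i - 2, by omega⟩) := by
    rw [hx']
    simp only []
    congr 1
    apply congrArg
    apply Fin.ext
    simp [Fin.val_rev]
    omega
  rw [hrev1, hrev2] at hres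
  have hres2 := hres (by linarith)
  have hcast : ((m : ℕ) : ℝ) = (k : ℝ) - (i : ℝ) + 1 := by
    rw [hm]
    push_cast [Nat.cast_sub hik]
    ring
  rw [hcast] at hres2
  linarith [hres2]


end OptSpace

/-- Spacing of the optimal points for the Laplace distribution (`1`-indexed points
`x_1 ≤ … ≤ x_k`, midpoints `y_i = (x_i + x_{i+1})/2`):
(1) if `y_i ≤ 0` (`1 ≤ i ≤ k−1`) then `x_i = y_i − log(1 + 1/i)/ε`;
(2) if `y_{i−1} ≥ 0` (`2 ≤ i ≤ k`) then `x_i = y_{i−1} + log(1 + 1/(k−i+1))/ε`. -/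
theorem optimal_points_spacing (ε : ℝ) (hε : 0 < ε) (k : ℕ) (hk : 1 ≤ k)
    (x : Fin k → ℝ) (hmono : Monotone x)
    (hopt : ∀ b : Fin k → ℝ, expErr ε x ≤ expErr ε b) :
    (∀ i : ℕ, ∀ _ : 1 ≤ i, ∀ hik : i < k,
      (x ⟨i - 1, by omega⟩ + x ⟨i, hik⟩) / 2 ≤ 0 →
      x ⟨i - 1, by omega⟩ =
        (x ⟨i - 1, by omega⟩ + x ⟨i, hik⟩) / 2 - Real.log (1 + 1 / (i : ℝ)) / ε) ∧
    (∀ i : ℕ, ∀ _ : 2 ≤ i, ∀ _ : i ≤ k,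
      0 ≤ (x ⟨i - 2, by omega⟩ + x ⟨i - 1, by omega⟩) / 2 →
      x ⟨i - 1, by omega⟩ =
        (x ⟨i - 2, by omega⟩ + x ⟨i - 1, by omega⟩) / 2
          + Real.log (1 + 1 / ((k : ℝ) - (i : ℝ) + 1)) / ε) :=
  ⟨OptSpace.part1 ε hε k hk x hmono hopt, OptSpace.part2 ε hε k hk x hmono hopt⟩
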